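/- arXiv:2012.01738 — 5 statements merged into one kernel-verified Lean document; each statement's English description precedes it below -/
import Mathlib

section
/- Let R be a commutative ring, n a natural number with 2 ≤ n, and d : ZMod n → R. Define the cyclic bidiagonal matrix M(d) : Matrix (ZMod n) (ZMod n) R by M(d) i i = d i, M(d) i (i+1) = -1, and M(d) i j = 0 for all j with j ≠ i and j ≠ i + 1. Then det (M(d)) = (∏ i, d i) - 1. -/
theorem stmt_1 {R : Type*} [CommRing R] (n : ℕ) (hn : 2 ≤ n) [NeZero n]
    (d : ZMod n → R) (M : Matrix (ZMod n) (ZMod n) R)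
    (hdiag : ∀ i : ZMod n, M i i = d i)
    (hsub : ∀ i : ZMod n, M i (i + 1) = -1)
    (hzero : ∀ i j : ZMod n, j ≠ i → j ≠ i + 1 → M i j = 0) :
    M.det = (∏ i : ZMod n, d i) - 1 := by
  haveI : Fact (1 < n) := ⟨hn⟩
  have h10 : (1 : ZMod n) ≠ 0 := one_ne_zero
  set c : Equiv.Perm (ZMod n) := Equiv.subRight 1 with hc
  have hcapp : ∀ x, c x = x - 1 := fun x => rfl
  have hpow : ∀ m : ℕ, c ^ m = Equiv.subRight (m : ZMod n) := by
    intro m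
    induction m with
    | zero => ext x; simp [Equiv.subRight]
    | succ k ih =>
      ext x
      simp only [pow_succ, Equiv.Perm.coe_mul, Function.comp_apply, ih, hcapp,
        Equiv.subRight_apply, Nat.cast_succ]
      ring
  have hcne : c ≠ 1 := by
    intro h
    have h2 : (0 : ZMod n) - 1 = 0 := by
      have := Equiv.ext_iff.mp h 0
      rwa [hcapp] at this
    rw [zero_sub, neg_eq_zero] at h2
    exact h10 h2
  have hsupp : c.support = Finset.univ := by
    ext x
    simp [Equiv.Perm.mem_support, hcapp, sub_eq_self, h10]
  have hcyc : c.IsCycle := by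
    refine ⟨0, ?_, ?_⟩
    · simp [hcapp, h10, sub_eq_self]
    · intro y _
      refine ⟨(((-y).val : ℕ) : ℤ), ?_⟩
      rw [zpow_natCast, hpow, Equiv.subRight_apply]
      simp [ZMod.natCast_val, ZMod.cast_id]
  have hsign : Equiv.Perm.sign c = -(-1) ^ n := by
    rw [hcyc.sign, hsupp]
    simp [ZMod.card]
  rw [Matrix.det_apply]
  have key : ∀ σ : Equiv.Perm (ZMod n), σ ≠ 1 → σ ≠ c →
      ∃ i, M (σ i) i = 0 := by
    intro σ hσ1 hσc
    by_contra h
    push_neg at h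
    have hmem : ∀ i, σ i = i ∨ σ i = i - 1 := by
      intro i
      by_contra hi
      push_neg at hi
      refine h i (hzero (σ i) i (fun he => hi.1 he.symm) ?_)
      intro he
      exact hi.2 (eq_sub_of_add_eq he.symm)
    by_cases hall : ∀ i, σ i = i
    · exact hσ1 (Equiv.ext hall)
    · push_neg at hall
      obtain ⟨i, hi⟩ := hall
      have hi' : σ i = i - 1 := (hmem i).resolve_left hi
      have step : ∀ k : ℕ, σ (i - k) = i - k - 1 := by
        intro k
        induction k with
        | zero => simpa using hi'
        | succ k ih =>
          have hcast : (i - ((k + 1 : ℕ) : ZMod n)) = i - k - 1 := by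
            push_cast; ring
          rcases hmem (i - ((k + 1 : ℕ) : ZMod n)) with h1 | h1
          · exfalso
            rw [hcast] at h1
            have h2 := σ.injective (h1.trans ih.symm)
            exact h10 (sub_eq_self.mp h2)
          · rw [hcast] at h1 ⊢
            exact h1
      apply hσc
      ext x
      have hx : x = i - (((i - x).val : ℕ) : ZMod n) := by
        simp [ZMod.natCast_val, ZMod.cast_id]
      rw [hx, step, hcapp]
  rw [Finset.sum_eq_add_of_mem 1 c (Finset.mem_univ _) (Finset.mem_univ _) hcne.symm
    (by
      intro σ _ hσ
      have hz : (∏ j, M (σ j) j) = 0 := by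
        obtain ⟨i, hi⟩ := key σ hσ.1 hσ.2
        exact Finset.prod_eq_zero (Finset.mem_univ i) hi
      rw [hz, smul_zero])]
  have hprodc : ∏ i, M (c i) i = (-1) ^ n := by
    calc ∏ i : ZMod n, M (c i) i = ∏ _i : ZMod n, (-1 : R) := by
          refine Finset.prod_congr rfl fun i _ => ?_
          rw [hcapp]
          simpa using hsub (i - 1)
      _ = (-1) ^ n := by simp [ZMod.card]
  simp only [Equiv.Perm.sign_one, one_smul, Equiv.Perm.one_apply, hdiag, hprodc, hsign]
  have hlast : ((-(-1 : ℤˣ) ^ n) : ℤˣ) • ((-1 : R) ^ n) = -1 := by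
    rcases Nat.even_or_odd n with h | h
    · simp [h.neg_one_pow]
    · simp [h.neg_one_pow]
  rw [hlast]
  ring
end

section
/- Let R be a commutative ring, n a natural number with 2 ≤ n, d : ZMod n → R, and let M(d) be the cyclic bidiagonal matrix. Then for all i j : ZMod n, the adjugate satisfies adjugate (M(d)) j i = ∏_{l ∈ Finset.range ((j - i - 1 : ZMod n).val)} d (i + 1 + l). Equivalently, the (i,j)-cofactor of M(d) (the signed determinant of the minor obtained by deleting row i and column j) equals the product of the diagonal entries d k over the cyclic interval of indices strictly between i and j (the empty product 1 when j = i + 1, and the product of all d k with k ≠ i when j = i). -/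
/-!
Rotate the indices of `ZMod n` so that row `i` becomes the last one. Since the cofactor ignores
row `i`, the rotated `M` may be replaced by the upper bidiagonal matrix `U` with diagonal
`d (i + 1), d (i + 2), …` and superdiagonal `-1`, whose wrap-around entry sat in the deleted row.
For `U`, the cofactor of the last row and column `K` is computed by induction on the size: if
`K` is not last, the last column of the minor has the single entry `-1` in its corner, and
expanding along it removes one index of the path `K, K + 1, …, last` without changing the sign;
if `K` is last, the minor is upper triangular with diagonal `d (i + 1), …, d (i - 1)`.
-/

open Finset

namespace Matrix

variable {R : Type*} [CommRing R]

/-- Entries are read through `Fin.val`, so that restricting to the first `k` indices is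
definitional (`upperBidiagonal_castSucc_castSucc`). -/
def upperBidiagonal (k : ℕ) (a : ℕ → R) : Matrix (Fin k) (Fin k) R :=
  of fun s t => if (t : ℕ) = s then a s else if (t : ℕ) = s + 1 then -1 else 0

theorem upperBidiagonal_castSucc_castSucc (k : ℕ) (a : ℕ → R) (s t : Fin k) :
    upperBidiagonal (k + 1) a s.castSucc t.castSucc = upperBidiagonal k a s t :=
  rfl

theorem upperBidiagonal_isUpperTriangular (k : ℕ) (a : ℕ → R) :
    (upperBidiagonal k a).IsUpperTriangular := by
  intro s t hts
  have : (t : ℕ) < s := hts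
  simp only [upperBidiagonal, of_apply]
  rw [if_neg (by omega), if_neg (by omega)]

theorem det_upperBidiagonal (k : ℕ) (a : ℕ → R) :
    (upperBidiagonal k a).det = ∏ l ∈ range k, a l := by
  rw [det_of_isUpperTriangular (upperBidiagonal_isUpperTriangular k a),
    ← Fin.prod_univ_eq_prod_range]
  simp [upperBidiagonal]

theorem det_succ_of_forall_ne_last_col_eq_zero {k : ℕ} (A : Matrix (Fin (k + 1)) (Fin (k + 1)) R)
    (hA : ∀ s ≠ Fin.last k, A s (Fin.last k) = 0) :
    A.det = A (Fin.last k) (Fin.last k) * (A.submatrix Fin.castSucc Fin.castSucc).det := by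
  rw [det_succ_column A (Fin.last k), Fintype.sum_eq_single (Fin.last k)
    fun s hs => by rw [hA s hs, mul_zero, zero_mul]]
  simp [← two_mul, pow_mul]

theorem adjugate_upperBidiagonal_last_last (m : ℕ) (a : ℕ → R) :
    adjugate (upperBidiagonal (m + 1) a) (Fin.last m) (Fin.last m) = ∏ l ∈ range m, a l := by
  rw [adjugate_fin_succ_eq_det_submatrix, Fin.succAbove_last, ← two_mul, pow_mul, neg_one_sq,
    one_pow, one_mul, ← det_upperBidiagonal m a]
  rfl

theorem adjugate_upperBidiagonal_castSucc_last (m : ℕ) (a : ℕ → R) (K : Fin (m + 1)) :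
    adjugate (upperBidiagonal (m + 2) a) K.castSucc (Fin.last (m + 1)) =
      adjugate (upperBidiagonal (m + 1) a) K (Fin.last m) := by
  have hlast : (K.castSucc).succAbove (Fin.last m) = Fin.last (m + 1) := by
    rw [Fin.succAbove_castSucc_of_le _ _ (Fin.le_last K), Fin.succ_last]
  rw [adjugate_fin_succ_eq_det_submatrix, adjugate_fin_succ_eq_det_submatrix,
    det_succ_of_forall_ne_last_col_eq_zero]
  · have hminor :
        ((upperBidiagonal (m + 2) a).submatrix Fin.castSucc K.castSucc.succAbove).submatrix
          Fin.castSucc Fin.castSucc =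
        (upperBidiagonal (m + 1) a).submatrix Fin.castSucc K.succAbove := by
      ext r c
      simp only [submatrix_apply, Fin.castSucc_succAbove_castSucc,
        upperBidiagonal_castSucc_castSucc]
    have hcorner : upperBidiagonal (m + 2) a (Fin.last m).castSucc (Fin.last (m + 1)) = -1 := by
      simp [upperBidiagonal]
    simp only [Fin.succAbove_last, submatrix_apply, hlast, hminor, hcorner, Fin.val_last,
      Fin.val_castSucc]
    ring
  · intro s hs
    have hs' : (s : ℕ) < m := Fin.val_lt_last hs
    simp only [submatrix_apply, Fin.succAbove_last, hlast, upperBidiagonal, of_apply,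
      Fin.val_last, Fin.val_castSucc]
    rw [if_neg (by omega), if_neg (by omega)]

theorem adjugate_upperBidiagonal_apply_last (a : ℕ → R) (m : ℕ) (K : Fin (m + 1)) :
    adjugate (upperBidiagonal (m + 1) a) K (Fin.last m) = ∏ l ∈ range K, a l := by
  induction m with
  | zero =>
    rw [Subsingleton.elim (α := Fin 1) K (Fin.last 0)]
    exact adjugate_upperBidiagonal_last_last 0 a
  | succ m ih =>
    induction K using Fin.lastCases with
    | last => exact adjugate_upperBidiagonal_last_last (m + 1) a
    | cast K => rw [adjugate_upperBidiagonal_castSucc_last, ih, Fin.val_castSucc]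

theorem adjugate_apply_congr {n : Type*} [Fintype n] [DecidableEq n] {A B : Matrix n n R} {j : n}
    (h : ∀ s ≠ j, A s = B s) (i : n) : adjugate A i j = adjugate B i j := by
  rw [adjugate_apply, adjugate_apply]
  congr 1
  ext s t
  by_cases hs : s = j
  · simp [hs]
  · simp [updateRow_ne hs, h s hs]

end Matrix

namespace ZMod

def finShiftEquiv {n : ℕ} [NeZero n] (c : ZMod n) : Fin n ≃ ZMod n where
  toFun t := c + (t : ℕ)
  invFun x := ⟨(x - c).val, val_lt _⟩
  left_inv t := Fin.ext (by simp [val_cast_of_lt t.2])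
  right_inv x := by simp

theorem finShiftEquiv_apply {n : ℕ} [NeZero n] (c : ZMod n) (t : Fin n) :
    finShiftEquiv c t = c + (t : ℕ) :=
  rfl

theorem finShiftEquiv_symm_apply {n : ℕ} [NeZero n] (c x : ZMod n) :
    ((finShiftEquiv c).symm x : ℕ) = (x - c).val :=
  rfl

end ZMod

open Matrix ZMod

theorem submatrix_finShiftEquiv_row_eq_upperBidiagonal {R : Type*} [CommRing R] {n : ℕ} [NeZero n]
    {d : ZMod n → R} {M : Matrix (ZMod n) (ZMod n) R}
    (hdiag : ∀ i : ZMod n, M i i = d i)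
    (hsub : ∀ i : ZMod n, M i (i + 1) = -1)
    (hzero : ∀ i j : ZMod n, j ≠ i → j ≠ i + 1 → M i j = 0)
    (c : ZMod n) (s : Fin n) (hs : (s : ℕ) + 1 < n) :
    M.submatrix (finShiftEquiv c) (finShiftEquiv c) s =
      upperBidiagonal n (fun l => d (c + l)) s := by
  set e := finShiftEquiv c
  have hsucc : e s + 1 = e ⟨s + 1, hs⟩ := by
    simp only [e, finShiftEquiv_apply, Nat.cast_add, Nat.cast_one]
    ring
  ext t
  simp only [submatrix_apply, upperBidiagonal, of_apply]
  split_ifs with hts hts'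
  · rw [Fin.ext hts, hdiag]
    rfl
  · rw [show t = ⟨s + 1, hs⟩ from Fin.ext hts', ← hsucc, hsub]
  · refine hzero _ _ (fun h => hts (congrArg Fin.val (e.injective h))) fun h => hts' ?_
    rw [hsucc] at h
    exact congrArg Fin.val (e.injective h)

theorem stmt_2_general {R : Type*} [CommRing R] (n : ℕ) [NeZero n]
    (d : ZMod n → R) (M : Matrix (ZMod n) (ZMod n) R)
    (hdiag : ∀ i : ZMod n, M i i = d i)
    (hsub : ∀ i : ZMod n, M i (i + 1) = -1)
    (hzero : ∀ i j : ZMod n, j ≠ i → j ≠ i + 1 → M i j = 0) :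
    ∀ i j : ZMod n,
      M.adjugate j i =
        ∏ l ∈ Finset.range ((j - i - 1 : ZMod n).val), d (i + 1 + (l : ZMod n)) := by
  intro i j
  obtain ⟨m, rfl⟩ := Nat.exists_eq_succ_of_ne_zero (NeZero.ne n)
  set e := finShiftEquiv (i + 1)
  have hi : e.symm i = Fin.last m := by
    rw [Equiv.symm_apply_eq, finShiftEquiv_apply, Fin.val_last, add_assoc, add_comm 1,
      natCast_self', add_zero]
  calc M.adjugate j i = adjugate (M.submatrix e e) (e.symm j) (e.symm i) := by
        rw [adjugate_submatrix_equiv_self, submatrix_apply, e.apply_symm_apply, e.apply_symm_apply]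
    _ = adjugate (upperBidiagonal (m + 1) fun l => d (i + 1 + l)) (e.symm j) (Fin.last m) := by
        rw [hi]
        refine adjugate_apply_congr (fun s hs => ?_) _
        exact submatrix_finShiftEquiv_row_eq_upperBidiagonal hdiag hsub hzero _ s
          (by have := Fin.val_lt_last hs; omega)
    _ = _ := by
        rw [adjugate_upperBidiagonal_apply_last, finShiftEquiv_symm_apply, sub_add_eq_sub_sub]

theorem stmt_2 {R : Type*} [CommRing R] (n : ℕ) (hn : 2 ≤ n) [NeZero n]
    (d : ZMod n → R) (M : Matrix (ZMod n) (ZMod n) R)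
    (hdiag : ∀ i : ZMod n, M i i = d i)
    (hsub : ∀ i : ZMod n, M i (i + 1) = -1)
    (hzero : ∀ i j : ZMod n, j ≠ i → j ≠ i + 1 → M i j = 0) :
    ∀ i j : ZMod n,
      M.adjugate j i =
        ∏ l ∈ Finset.range ((j - i - 1 : ZMod n).val), d (i + 1 + (l : ZMod n)) :=
  stmt_2_general n d M hdiag hsub hzero
end

section
/- Let R be a commutative ring, s t : Rˣ units of R, and set G = 1 - (s : R) * (t : R). Let n be a natural number with 2 ≤ n and let M : Matrix (ZMod n) (ZMod n) R be a matrix such that: (1) there is an integer w with ∏ i, M i i = ((s * t) ^ w : Rˣ) (coerced to R); (2) M i (i + 1) = -1 for every i; and (3) G divides M i j for every i, j with j ≠ i and j ≠ i + 1. Then G divides det M. -/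
theorem stmt_5 {R : Type*} [CommRing R] (s t : Rˣ) (G : R)
    (hG : G = 1 - (s : R) * (t : R))
    (n : ℕ) (hn : 2 ≤ n) [NeZero n]
    (M : Matrix (ZMod n) (ZMod n) R)
    (w : ℤ) (hdiag : ∏ i : ZMod n, M i i = (((s * t) ^ w : Rˣ) : R))
    (hsub : ∀ i : ZMod n, M i (i + 1) = -1)
    (hoff : ∀ i j : ZMod n, j ≠ i → j ≠ i + 1 → G ∣ M i j) :
    G ∣ M.det := by
  haveI : Fact (1 < n) := ⟨hn⟩
  classical
  set φ := Ideal.Quotient.mk (Ideal.span {G}) with hφ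
  rw [← Ideal.mem_span_singleton, ← Ideal.Quotient.eq_zero_iff_mem]
  have hGdet : (φ M.det = 0) → (Ideal.Quotient.mk (Ideal.span {G})) M.det = 0 := fun h => h
  apply hGdet
  rw [RingHom.map_det]
  set N := φ.mapMatrix M with hN
  have hG0 : φ G = 0 := Ideal.Quotient.eq_zero_iff_mem.2 (Ideal.subset_span rfl)
  have hone : (1 : ZMod n) ≠ 0 := one_ne_zero
  -- the off entries vanish
  have hzero : ∀ i j : ZMod n, j ≠ i → j ≠ i + 1 → N i j = 0 := by
    intro i j h1 h2
    obtain ⟨c, hc⟩ := hoff i j h1 h2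
    simp [hN, RingHom.mapMatrix_apply, Matrix.map_apply, hc, map_mul, hG0]
  have hst : φ ((s : R) * (t : R)) = 1 := by
    have : (s : R) * (t : R) = 1 - G := by rw [hG]; ring
    rw [this, map_sub, map_one, hG0, sub_zero]
  have hsubN : ∀ i : ZMod n, N i (i + 1) = -1 := by
    intro i; simp [hN, RingHom.mapMatrix_apply, Matrix.map_apply, hsub i]
  have hdiagN : ∏ i : ZMod n, N i i = 1 := by
    have h1 : ∏ i : ZMod n, N i i = φ (∏ i : ZMod n, M i i) := by
      exact (map_prod (Ideal.Quotient.mk (Ideal.span {G})) (fun i => M i i) Finset.univ).symm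
    rw [h1, hdiag]
    have hu : Units.map φ.toMonoidHom (s * t) = 1 := by
      ext; simpa using hst
    calc φ (((s * t) ^ w : Rˣ) : R)
        = ((Units.map φ.toMonoidHom ((s * t) ^ w) : _ˣ) : _) := rfl
      _ = (((Units.map φ.toMonoidHom (s * t)) ^ w : _ˣ) : _) := by rw [map_zpow]
      _ = 1 := by rw [hu, one_zpow, Units.val_one]
  -- the cyclic permutation
  set c : Equiv.Perm (ZMod n) := Equiv.subRight 1 with hcdef
  have hc_apply : ∀ x : ZMod n, c x = x - 1 := fun x => rfl
  have hcpow : ∀ (m : ℕ) (x : ZMod n), (c ^ m) x = x - m := by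
    intro m
    induction m with
    | zero => intro x; simp
    | succ k ih =>
      intro x
      rw [pow_succ, Equiv.Perm.mul_apply, ih, hc_apply]
      push_cast; ring
  have hc_ne : ∀ x : ZMod n, c x ≠ x := by
    intro x h
    rw [hc_apply, sub_eq_self] at h
    exact hone h
  have hc_cycle : c.IsCycle := by
    refine ⟨0, hc_ne 0, fun y _ => ⟨((- y).val : ℕ), ?_⟩⟩
    rw [zpow_natCast, hcpow]
    rw [ZMod.natCast_val, ZMod.cast_id]
    ring
  have hsupp : c.support = Finset.univ := by
    ext x; simp [Equiv.Perm.mem_support, hc_ne x]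
  have hsign : Equiv.Perm.sign c = -(-1) ^ n := by
    rw [hc_cycle.sign, hsupp]
    simp [ZMod.card]
  have hne : (1 : Equiv.Perm (ZMod n)) ≠ c := by
    intro h
    have := hc_ne 0
    rw [← h] at this
    simp at this
  -- the claim: only 1 and c contribute
  have claim : ∀ σ : Equiv.Perm (ZMod n), (∀ i, σ i = i ∨ σ i = i - 1) → σ = 1 ∨ σ = c := by
    intro σ h
    by_cases hid : ∀ i, σ i = i
    · left; exact Equiv.ext hid
    · right
      push_neg at hid
      obtain ⟨i0, hi0⟩ := hid
      have hi0' : σ i0 = i0 - 1 := (h i0).resolve_left hi0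
      have key : ∀ k : ℕ, σ (i0 - k) = i0 - k - 1 := by
        intro k
        induction k with
        | zero => simpa using hi0'
        | succ k ih =>
          have hj : (i0 - (k + 1 : ℕ) : ZMod n) = i0 - k - 1 := by push_cast; ring
          rw [hj]
          rcases h (i0 - k - 1) with h1 | h1
          · exfalso
            have : σ (i0 - ↑k - 1) = σ (i0 - ↑k) := by rw [h1, ih]
            have := σ.injective this
            rw [sub_eq_self] at this
            exact hone this
          · exact h1
      ext x
      have hx : x = i0 - ((i0 - x).val : ℕ) := by
        rw [ZMod.natCast_val, ZMod.cast_id]; ring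
      rw [hx, key, hc_apply]
  rw [Matrix.det_apply]
  have hzero_term : ∀ σ ∈ Finset.univ, σ ∉ ({1, c} : Finset (Equiv.Perm (ZMod n))) →
      Equiv.Perm.sign σ • ∏ i, N (σ i) i = 0 := by
    intro σ _ hσ
    simp only [Finset.mem_insert, Finset.mem_singleton, not_or] at hσ
    by_cases hall : ∀ i, σ i = i ∨ σ i = i - 1
    · rcases claim σ hall with h | h
      · exact absurd h hσ.1
      · exact absurd h hσ.2
    · push_neg at hall
      obtain ⟨i, h1, h2⟩ := hall
      have : N (σ i) i = 0 := by
        apply hzero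
        · exact fun h => h1 h.symm
        · intro h
          exact h2 (eq_sub_of_add_eq h.symm)
      exact smul_eq_zero_of_right _ (Finset.prod_eq_zero (Finset.mem_univ i) this)
  rw [← Finset.sum_subset (Finset.subset_univ ({1, c} : Finset (Equiv.Perm (ZMod n)))) hzero_term]
  rw [Finset.sum_pair hne]
  have hprodc : ∏ i : ZMod n, N (c i) i = (-1) ^ n := by
    have : ∀ i : ZMod n, N (c i) i = -1 := by
      intro i
      rw [hc_apply]
      have := hsubN (i - 1)
      rwa [sub_add_cancel] at this
    rw [Finset.prod_congr rfl (fun i _ => this i), Finset.prod_const]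
    simp [ZMod.card]
  simp only [Equiv.Perm.one_apply, hdiagN, map_one, hprodc, hsign]
  simp [Units.smul_def, zsmul_eq_mul]
  rw [← pow_add]
  have : Even (n + n) := ⟨n, rfl⟩
  rw [this.neg_one_pow]
  ring
end

section
/- Let R be a commutative ring, s t : Rˣ units of R, n a natural number with 2 ≤ n, and d : ZMod n → R. Suppose there are a function c : ZMod n → Fin 4 and natural numbers p, q such that d i = (s : R) if c i = 0, d i = (t : R) if c i = 1, d i = (s⁻¹ : R) if c i = 2, d i = (t⁻¹ : R) if c i = 3, and the fibers of c over 0 and over 1 each have cardinality p while the fibers over 2 and over 3 each have cardinality q. Let M(d) be the cyclic bidiagonal matrix. Then det (M(d)) = (((s * t) ^ ((p : ℤ) - (q : ℤ)) : Rˣ) : R) - 1. -/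
theorem stmt_6 {R : Type*} [CommRing R] (s t : Rˣ)
    (n : ℕ) (hn : 2 ≤ n) [NeZero n]
    (d : ZMod n → R) (c : ZMod n → Fin 4) (p q : ℕ)
    (hs : ∀ i : ZMod n, c i = 0 → d i = (s : R))
    (ht : ∀ i : ZMod n, c i = 1 → d i = (t : R))
    (hsi : ∀ i : ZMod n, c i = 2 → d i = ((s⁻¹ : Rˣ) : R))
    (hti : ∀ i : ZMod n, c i = 3 → d i = ((t⁻¹ : Rˣ) : R))
    (hp0 : (Finset.univ.filter (fun i : ZMod n => c i = 0)).card = p)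
    (hp1 : (Finset.univ.filter (fun i : ZMod n => c i = 1)).card = p)
    (hq2 : (Finset.univ.filter (fun i : ZMod n => c i = 2)).card = q)
    (hq3 : (Finset.univ.filter (fun i : ZMod n => c i = 3)).card = q)
    (M : Matrix (ZMod n) (ZMod n) R)
    (hdiag : ∀ i : ZMod n, M i i = d i)
    (hsub : ∀ i : ZMod n, M i (i + 1) = -1)
    (hzero : ∀ i j : ZMod n, j ≠ i → j ≠ i + 1 → M i j = 0) :
    M.det = (((s * t) ^ ((p : ℤ) - (q : ℤ)) : Rˣ) : R) - 1 := by
  classical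
  have hn1 : (1 : ZMod n) ≠ 0 := by
    intro h
    have : (n : ℕ) ∣ 1 := by
      have := (ZMod.natCast_eq_zero_iff 1 n).1 (by exact_mod_cast h)
      exact this
    have := Nat.le_of_dvd one_pos this
    omega
  -- the cyclic shift permutation
  set cyc : Equiv.Perm (ZMod n) := Equiv.subRight 1 with hcyc_def
  have hcyc_apply : ∀ x : ZMod n, cyc x = x - 1 := fun x => rfl
  have hcyc_pow : ∀ (k : ℕ) (x : ZMod n), (cyc ^ k) x = x - k := by
    intro k
    induction k with
    | zero => simp
    | succ k ih =>
      intro x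
      rw [pow_succ, Equiv.Perm.mul_apply, hcyc_apply, ih]
      push_cast
      ring
  have hcyc_ne : cyc ≠ 1 := by
    intro h
    have := congrArg (fun σ : Equiv.Perm (ZMod n) => σ 0) h
    simp [hcyc_apply] at this
    exact hn1 this
  -- key: any perm with nonzero product term is 1 or cyc
  have hclass : ∀ σ : Equiv.Perm (ZMod n), σ ≠ 1 → σ ≠ cyc →
      ∃ i, M (σ i) i = 0 := by
    intro σ hσ1 hσc
    by_contra h
    push_neg at h
    have hmem : ∀ i : ZMod n, σ i = i ∨ σ i = i - 1 := by
      intro i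
      by_contra hi
      push_neg at hi
      refine h i (hzero (σ i) i ?_ ?_)
      · intro hh
        exact hi.1 hh.symm
      · intro hh
        exact hi.2 (by rw [eq_sub_iff_add_eq, ← hh])
    by_cases hex : ∃ i₀, σ i₀ = i₀ - 1
    · obtain ⟨i₀, h0⟩ := hex
      apply hσc
      ext x
      rw [hcyc_apply]
      have key : ∀ k : ℕ, σ (i₀ - k) = i₀ - k - 1 := by
        intro k
        induction k with
        | zero => simpa using h0
        | succ k ih =>
          rcases hmem (i₀ - (k + 1 : ℕ)) with h' | h'
          · exfalso
            have hcast : (i₀ - ((k:ℕ) + 1 : ℕ) : ZMod n) = i₀ - k - 1 := by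
              push_cast; ring
            have : σ (i₀ - ((k:ℕ) + 1 : ℕ)) = σ (i₀ - k) := by
              rw [h', hcast, ← ih]
            have := σ.injective this
            rw [hcast] at this
            exact hn1 (by linear_combination -this)
          · exact h'
      obtain ⟨k, hk⟩ : ∃ k : ℕ, x = i₀ - k :=
        ⟨(i₀ - x).val, by rw [ZMod.natCast_val, ZMod.cast_id]; ring⟩
      rw [hk]; exact key k
    · push_neg at hex
      apply hσ1
      ext x
      rcases hmem x with h' | h'
      · simpa using h'
      · exact absurd h' (hex x)
  have hcard : Fintype.card (ZMod n) = n := ZMod.card n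
  have hsplit : M.det = (∏ i, d i) - 1 := by
    rw [Matrix.det_apply]
    have hterm0 : ∀ σ : Equiv.Perm (ZMod n),
        σ ∉ ({1, cyc} : Finset (Equiv.Perm (ZMod n))) →
        Equiv.Perm.sign σ • ∏ i, M (σ i) i = 0 := by
      intro σ hσ
      simp only [Finset.mem_insert, Finset.mem_singleton] at hσ
      push_neg at hσ
      obtain ⟨i, hi⟩ := hclass σ hσ.1 hσ.2
      rw [show (∏ j : ZMod n, M (σ j) j) = 0 from
        Finset.prod_eq_zero (Finset.mem_univ i) hi, smul_zero]
    rw [← Finset.sum_subset (Finset.subset_univ {1, cyc}) (fun σ _ hσ => hterm0 σ hσ),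
      Finset.sum_pair hcyc_ne.symm]
    have h1 : (Equiv.Perm.sign (1 : Equiv.Perm (ZMod n))) •
        ∏ i, M ((1 : Equiv.Perm (ZMod n)) i) i = ∏ i, d i := by
      simp [hdiag]
    have hsign : Equiv.Perm.sign cyc = -(-1) ^ n := by
      have hc : cyc.IsCycle := by
        refine ⟨0, ?_, ?_⟩
        · rw [hcyc_apply]
          intro h
          exact hn1 (by linear_combination -h)
        · intro y _
          refine ⟨(((-y).val : ℕ) : ℤ), ?_⟩
          rw [zpow_natCast, hcyc_pow, ZMod.natCast_val, ZMod.cast_id]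
          ring
      have hsupp : cyc.support = Finset.univ := by
        ext x
        simp only [Equiv.Perm.mem_support, Finset.mem_univ, iff_true, hcyc_apply]
        intro h
        exact hn1 (by linear_combination -h)
      rw [hc.sign, hsupp, Finset.card_univ, hcard]
    have h2 : (Equiv.Perm.sign cyc) • ∏ i, M (cyc i) i = -1 := by
      have hent : ∀ i : ZMod n, M (cyc i) i = -1 := by
        intro i
        have h' : (cyc i) + 1 = i := by rw [hcyc_apply]; ring
        have := hsub (cyc i)
        rwa [h'] at this
      rw [Finset.prod_congr rfl (fun i _ => hent i), Finset.prod_const,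
        Finset.card_univ, hcard, hsign, Units.smul_def, zsmul_eq_mul]
      push_cast
      have hsq : ((-1:R)^n) * ((-1:R)^n) = 1 := by
        rw [← mul_pow]; norm_num
      linear_combination -hsq
    rw [h1, h2]
    ring
  have hprod : ∏ i, d i = ((s^p * t^p * (s⁻¹:Rˣ)^q * (t⁻¹:Rˣ)^q : Rˣ) : R) := by
    rw [← Finset.prod_fiberwise Finset.univ c d, Fin.prod_univ_four]
    have e0 : ∏ i ∈ Finset.univ.filter (fun i => c i = 0), d i = (s:R)^p := by
      rw [Finset.prod_congr rfl (fun i hi => hs i (Finset.mem_filter.1 hi).2),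
        Finset.prod_const, hp0]
    have e1 : ∏ i ∈ Finset.univ.filter (fun i => c i = 1), d i = (t:R)^p := by
      rw [Finset.prod_congr rfl (fun i hi => ht i (Finset.mem_filter.1 hi).2),
        Finset.prod_const, hp1]
    have e2 : ∏ i ∈ Finset.univ.filter (fun i => c i = 2), d i = ((s⁻¹:Rˣ):R)^q := by
      rw [Finset.prod_congr rfl (fun i hi => hsi i (Finset.mem_filter.1 hi).2),
        Finset.prod_const, hq2]
    have e3 : ∏ i ∈ Finset.univ.filter (fun i => c i = 3), d i = ((t⁻¹:Rˣ):R)^q := by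
      rw [Finset.prod_congr rfl (fun i hi => hti i (Finset.mem_filter.1 hi).2),
        Finset.prod_const, hq3]
    rw [e0, e1, e2, e3]
    push_cast
    ring
  have hunit : ((s * t) ^ ((p:ℤ) - (q:ℤ)) : Rˣ) = s^p * t^p * (s⁻¹)^q * (t⁻¹)^q := by
    rw [zpow_sub, zpow_natCast, zpow_natCast, mul_pow, mul_pow, mul_inv,
      inv_pow, inv_pow, ← mul_assoc]
  rw [hsplit, hprod, hunit]
end

section
/- Let R be a commutative ring, s t : Rˣ units of R, and set G = 1 - (s : R) * (t : R). Let n be a natural number with 2 ≤ n, w : ℤ an integer, d : ZMod n → R with ∏ i, d i = ((s * t) ^ w : Rˣ) (coerced to R), and e : ZMod n → ZMod n → R. Define M : Matrix (ZMod n) (ZMod n) R by M i i = d i, M i (i + 1) = -1, and M i j = G * e i j for all j with j ≠ i and j ≠ i + 1. Then G ^ 2 divides det M - ((((s * t) ^ w : Rˣ) : R) - 1) - G * (∑ over all pairs (i, j) with j ≠ i and j ≠ i + 1 of e i j * ∏_{l ∈ Finset.range ((j - i - 1 : ZMod n).val)} d (i + 1 + l)). -/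
open Finset Equiv Equiv.Perm

variable {n : ℕ}

private def Pp (j : ZMod n) : ℕ → Equiv.Perm (ZMod n)
  | 0 => 1
  | a + 1 => Equiv.swap (j + (a : ZMod n)) (j + (a : ZMod n) + 1) * Pp j a

private lemma zmod_castinj {x y : ℕ} (hx : x < n) (hy : y < n)
    (h : (x : ZMod n) = (y : ZMod n)) : x = y := by
  haveI : NeZero n := ⟨by omega⟩
  have h2 := congrArg ZMod.val h
  rwa [ZMod.val_cast_of_lt hx, ZMod.val_cast_of_lt hy] at h2

private lemma zmod_one_ne_zero (hn : 2 ≤ n) : (1 : ZMod n) ≠ 0 := by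
  intro h
  have h' : ((1 : ℕ) : ZMod n) = ((0 : ℕ) : ZMod n) := by push_cast; exact h
  have : (1 : ℕ) = 0 := zmod_castinj (by omega) (by omega) h'
  omega

private lemma Pp_self (j : ZMod n) : ∀ a : ℕ, Pp j a j = j + (a : ZMod n)
  | 0 => by simp [Pp]
  | a + 1 => by
    simp only [Pp, Equiv.Perm.mul_apply, Pp_self j a, Equiv.swap_apply_left]
    push_cast; ring

private lemma Pp_fixed (j : ZMod n) : ∀ a s : ℕ, a < s → s < n →
    Pp j a (j + (s : ZMod n)) = j + (s : ZMod n)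
  | 0, s, _, _ => by simp [Pp]
  | a + 1, s, h1, h2 => by
    have hne1 : j + (s : ZMod n) ≠ j + (a : ZMod n) := by
      intro h
      have : s = a := zmod_castinj h2 (by omega) (add_left_cancel h)
      omega
    have hne2 : j + (s : ZMod n) ≠ j + (a : ZMod n) + 1 := by
      intro h
      rw [add_assoc] at h
      have h' : (s : ZMod n) = ((a + 1 : ℕ) : ZMod n) := by
        push_cast; exact add_left_cancel h
      have : s = a + 1 := zmod_castinj h2 (by omega) h'
      omega
    simp only [Pp, Equiv.Perm.mul_apply, Pp_fixed j a s (by omega) h2,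
      Equiv.swap_apply_of_ne_of_ne hne1 hne2]

private lemma Pp_mid (j : ZMod n) : ∀ a s : ℕ, 1 ≤ s → s ≤ a → a < n →
    Pp j a (j + (s : ZMod n)) = j + ((s - 1 : ℕ) : ZMod n)
  | 0, s, h1, h2, _ => by omega
  | a + 1, s, h1, h2, h3 => by
    rcases eq_or_lt_of_le h2 with he | hlt
    · rw [he]
      have hfix : Pp j a (j + ((a + 1 : ℕ) : ZMod n)) = j + ((a + 1 : ℕ) : ZMod n) :=
        Pp_fixed j a (a + 1) (by omega) h3
      have hc : j + ((a + 1 : ℕ) : ZMod n) = j + (a : ZMod n) + 1 := by push_cast; ring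
      have hfix2 : Pp j a (j + (a : ZMod n) + 1) = j + (a : ZMod n) + 1 := by
        rw [← hc]; exact hfix
      simp only [Pp, Equiv.Perm.mul_apply, hc, hfix2, Equiv.swap_apply_right]
      norm_num
    · have ih := Pp_mid j a s h1 (by omega) (by omega)
      have hne1 : j + ((s - 1 : ℕ) : ZMod n) ≠ j + (a : ZMod n) := by
        intro h
        have : s - 1 = a := zmod_castinj (by omega) (by omega) (add_left_cancel h)
        omega
      have hne2 : j + ((s - 1 : ℕ) : ZMod n) ≠ j + (a : ZMod n) + 1 := by
        intro h
        rw [add_assoc] at h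
        have h' : ((s - 1 : ℕ) : ZMod n) = ((a + 1 : ℕ) : ZMod n) := by
          push_cast; exact add_left_cancel h
        have : s - 1 = a + 1 := zmod_castinj (by omega) (by omega) h'
        omega
      simp only [Pp, Equiv.Perm.mul_apply, ih,
        Equiv.swap_apply_of_ne_of_ne hne1 hne2]

private lemma sign_Pp [NeZero n] (hn : 2 ≤ n) (j : ZMod n) :
    ∀ a : ℕ, Equiv.Perm.sign (Pp j a) = (-1) ^ a
  | 0 => by simp [Pp]
  | a + 1 => by
    have hne : j + (a : ZMod n) ≠ j + (a : ZMod n) + 1 := by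
      intro h
      exact zmod_one_ne_zero hn (left_eq_add.mp h)
    simp only [Pp]
    rw [map_mul, Equiv.Perm.sign_swap hne, sign_Pp hn j a, pow_succ]
    exact mul_comm _ _

private lemma zmod_rep [NeZero n] (j k : ZMod n) : k = j + (((k - j).val : ℕ) : ZMod n) := by
  rw [ZMod.natCast_val, ZMod.cast_id]; ring

private lemma Pp_unique (hn : 2 ≤ n) (σ : Equiv.Perm (ZMod n)) (j : ZMod n) (a : ℕ)
    (ha1 : 1 ≤ a) (ha2 : a < n) (hj : σ j = j + (a : ZMod n))
    (hk : ∀ k, k ≠ j → σ k = k ∨ σ k = k - 1) : σ = Pp j a := by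
  haveI : NeZero n := ⟨by omega⟩
  have key : ∀ s : ℕ, s < n → σ (j + (s : ZMod n)) = Pp j a (j + (s : ZMod n)) := by
    intro s
    induction s using Nat.strong_induction_on with
    | _ s ih =>
      intro hs
      rcases Nat.eq_zero_or_pos s with rfl | hs1
      · simpa [Pp_self] using hj
      rcases le_or_gt s a with hsa | has
      · -- 1 ≤ s ≤ a : goal σ (j + s) = j + (s-1)
        rw [Pp_mid j a s hs1 hsa ha2]
        have hσk₀ : σ (σ.symm (j + ((s - 1 : ℕ) : ZMod n))) = j + ((s - 1 : ℕ) : ZMod n) :=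
          σ.apply_symm_apply _
        set k₀ := σ.symm (j + ((s - 1 : ℕ) : ZMod n)) with hk₀
        have hk₀j : k₀ ≠ j := by
          intro h
          rw [h, hj] at hσk₀
          have : a = s - 1 := zmod_castinj ha2 (by omega) (add_left_cancel hσk₀)
          omega
        rcases hk k₀ hk₀j with h | h
        · exfalso
          have hk₀v : k₀ = j + ((s - 1 : ℕ) : ZMod n) := by rw [← hσk₀, h]
          rcases Nat.lt_or_ge 1 s with h1 | h1
          · have ihs := ih (s - 1) (by omega) (by omega)
            rw [Pp_mid j a (s - 1) (by omega) (by omega) ha2] at ihs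
            rw [← hk₀v, hσk₀] at ihs
            have : s - 1 = s - 1 - 1 := zmod_castinj (by omega) (by omega) (add_left_cancel ihs)
            omega
          · -- s = 1 : k₀ = j
            apply hk₀j
            rw [hk₀v]
            have : s - 1 = 0 := by omega
            rw [this]; simp
        · -- σ k₀ = k₀ - 1
          have hk₀v : k₀ = j + ((s - 1 : ℕ) : ZMod n) + 1 := by
            rw [h] at hσk₀
            rw [← hσk₀]; ring
          have hcast : j + ((s - 1 : ℕ) : ZMod n) + 1 = j + (s : ZMod n) := by
            rw [Nat.cast_sub hs1]; push_cast; ring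
          rw [hcast] at hk₀v
          rw [← hk₀v, hσk₀]
      · -- a < s < n : goal σ (j + s) = j + s
        rw [Pp_fixed j a s has hs]
        have hsj : j + (s : ZMod n) ≠ j := by
          intro h
          have h' : (s : ZMod n) = ((0 : ℕ) : ZMod n) := by
            push_cast
            exact (add_eq_left).mp h
          have := zmod_castinj hs (by omega) h'
          omega
        rcases hk _ hsj with h | h
        · exact h
        · exfalso
          rcases Nat.eq_or_lt_of_le (Nat.succ_le_of_lt has) with h1 | h1
          · -- s = a + 1
            have hsub : j + (s : ZMod n) - 1 = j + (a : ZMod n) := by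
              rw [← h1]; push_cast; ring
            rw [hsub, ← hj] at h
            have := σ.injective h
            exact hsj (by rw [this])
          · have ihs := ih (s - 1) (by omega) (by omega)
            rw [Pp_fixed j a (s - 1) (by omega) (by omega)] at ihs
            have hsub : j + (s : ZMod n) - 1 = j + ((s - 1 : ℕ) : ZMod n) := by
              rw [Nat.cast_sub (by omega)]; push_cast; ring
            rw [hsub, ← ihs] at h
            have h2 := σ.injective h
            have : s = s - 1 := zmod_castinj hs (by omega) (add_left_cancel h2)
            omega
  ext k
  have h := key ((k - j).val) (ZMod.val_lt _)
  rwa [← zmod_rep j k] at h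

private lemma Pp_shift (hn : 2 ≤ n) (j k : ZMod n) : Pp j (n - 1) k = k - 1 := by
  haveI : NeZero n := ⟨by omega⟩
  set s := (k - j).val with hs
  have hk : k = j + (s : ZMod n) := zmod_rep j k
  rcases Nat.eq_zero_or_pos s with h0 | h1
  · rw [hk, h0]
    simp only [Nat.cast_zero, add_zero]
    rw [Pp_self]
    rw [Nat.cast_sub (by omega), ZMod.natCast_self]
    push_cast; ring
  · rw [hk, Pp_mid j (n - 1) s h1 (by have := ZMod.val_lt (k - j); omega) (by omega)]
    rw [Nat.cast_sub h1]
    push_cast; ring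

private lemma Pp_cases (hn : 2 ≤ n) (j : ZMod n) (a : ℕ) (ha2 : a < n) (k : ZMod n)
    (hkj : k ≠ j) : Pp j a k = k ∨ Pp j a k = k - 1 := by
  haveI : NeZero n := ⟨by omega⟩
  set s := (k - j).val with hs
  have hk : k = j + (s : ZMod n) := zmod_rep j k
  have hs1 : 1 ≤ s := by
    rcases Nat.eq_zero_or_pos s with h0 | h1
    · exfalso; apply hkj
      rw [hk, h0]; simp
    · exact h1
  rcases le_or_gt s a with hsa | has
  · right
    rw [hk, Pp_mid j a s hs1 hsa ha2, Nat.cast_sub hs1]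
    push_cast; ring
  · left
    rw [hk, Pp_fixed j a s has (by rw [hs]; exact ZMod.val_lt _)]

private lemma prod_zmod {R : Type*} [CommRing R] [NeZero n] (f : ZMod n → R) :
    ∏ k, f k = ∏ s ∈ Finset.range n, f (s : ZMod n) := by
  apply Finset.prod_nbij' (fun k : ZMod n => k.val) (fun s : ℕ => (s : ZMod n))
  · intro a _; exact Finset.mem_range.mpr (ZMod.val_lt a)
  · intro a _; exact Finset.mem_univ _
  · intro a _; rw [ZMod.natCast_val, ZMod.cast_id]
  · intro a ha; rw [ZMod.val_cast_of_lt (Finset.mem_range.mp ha)]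
  · intro a _; rw [ZMod.natCast_val, ZMod.cast_id]

private lemma prod_M_Pp {R : Type*} [CommRing R] [NeZero n] (hn : 2 ≤ n)
    (M : Matrix (ZMod n) (ZMod n) R) (d : ZMod n → R)
    (hdiag : ∀ i, M i i = d i) (hsub : ∀ i, M i (i + 1) = -1)
    (j : ZMod n) (a : ℕ) (ha1 : 1 ≤ a) (ha2 : a < n) :
    ∏ k, M (Pp j a k) k
      = M (j + (a : ZMod n)) j * ((-1 : R) ^ a * ∏ s ∈ Finset.Ico (a + 1) n, d (j + (s : ZMod n))) := by
  have h1 : ∏ k, M (Pp j a k) k = ∏ k, M (Pp j a (j + k)) (j + k) :=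
    (Equiv.prod_comp (Equiv.addLeft j) fun k => M (Pp j a k) k).symm
  rw [h1, prod_zmod (fun k => M (Pp j a (j + k)) (j + k)), Finset.range_eq_Ico,
    ← Finset.prod_Ico_consecutive _ (Nat.zero_le (a + 1)) (by omega : a + 1 ≤ n),
    Finset.prod_eq_prod_Ico_succ_bot (by omega : 0 < a + 1)]
  have t0 : M (Pp j a (j + ((0 : ℕ) : ZMod n))) (j + ((0 : ℕ) : ZMod n))
      = M (j + (a : ZMod n)) j := by
    norm_num [Pp_self]
  have tmid : ∏ s ∈ Finset.Ico 1 (a + 1), M (Pp j a (j + (s : ZMod n))) (j + (s : ZMod n))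
      = (-1 : R) ^ a := by
    rw [Finset.prod_congr rfl (g := fun _ => (-1 : R)) (fun s hs => ?_), Finset.prod_const,
      Nat.card_Ico]
    · norm_num
    · obtain ⟨hs1, hs2⟩ := Finset.mem_Ico.mp hs
      rw [Pp_mid j a s hs1 (by omega) ha2]
      have hc : j + (s : ZMod n) = (j + ((s - 1 : ℕ) : ZMod n)) + 1 := by
        rw [Nat.cast_sub hs1]; push_cast; ring
      rw [hc, hsub]
  have tend : ∏ s ∈ Finset.Ico (a + 1) n, M (Pp j a (j + (s : ZMod n))) (j + (s : ZMod n))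
      = ∏ s ∈ Finset.Ico (a + 1) n, d (j + (s : ZMod n)) := by
    apply Finset.prod_congr rfl
    intro s hs
    obtain ⟨hs1, hs2⟩ := Finset.mem_Ico.mp hs
    rw [Pp_fixed j a s (by omega) hs2, hdiag]
  rw [t0, tmid, tend, mul_assoc]

private lemma term_pair {R : Type*} [CommRing R] [NeZero n] (hn : 2 ≤ n) (G : R)
    (M : Matrix (ZMod n) (ZMod n) R) (d : ZMod n → R) (e : ZMod n → ZMod n → R)
    (hdiag : ∀ i, M i i = d i) (hsub : ∀ i, M i (i + 1) = -1)
    (hoff : ∀ i j : ZMod n, j ≠ i → j ≠ i + 1 → M i j = G * e i j)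
    (i j : ZMod n) (hji : j ≠ i) (hji1 : j ≠ i + 1) :
    ((Equiv.Perm.sign (Pp j ((i - j).val)) : ℤ) : R) * ∏ k, M (Pp j ((i - j).val) k) k
      = G * (e i j * ∏ l ∈ Finset.range ((j - i - 1).val), d (i + 1 + (l : ZMod n))) := by
  set a := (i - j).val with ha
  have hij : i - j ≠ 0 := sub_ne_zero.mpr (Ne.symm hji)
  have ha1 : 1 ≤ a := by
    rcases Nat.eq_zero_or_pos a with h0 | h1
    · exact absurd ((ZMod.val_eq_zero _).mp h0) hij
    · exact h1
  have ha2 : a < n := ZMod.val_lt _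
  have hcast : ((a : ℕ) : ZMod n) = i - j := by rw [ha, ZMod.natCast_val, ZMod.cast_id]
  have hji' : j + ((a : ℕ) : ZMod n) = i := by rw [hcast]; ring
  rw [prod_M_Pp hn M d hdiag hsub j a ha1 ha2, sign_Pp hn j a, hji',
    hoff i j hji hji1]
  have hsign : ((((-1 : ℤˣ) ^ a : ℤˣ) : ℤ) : R) = (-1 : R) ^ a := by push_cast; ring
  rw [hsign]
  have hval : (j - i - 1).val = n - (a + 1) := by
    have h1 : j - i - 1 = ((n - (a + 1) : ℕ) : ZMod n) := by
      rw [Nat.cast_sub (by omega : a + 1 ≤ n), ZMod.natCast_self]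
      push_cast
      rw [hcast]; ring
    rw [h1, ZMod.val_cast_of_lt (by omega)]
  have hIco : ∏ s ∈ Finset.Ico (a + 1) n, d (j + (s : ZMod n))
      = ∏ l ∈ Finset.range ((j - i - 1).val), d (i + 1 + (l : ZMod n)) := by
    rw [hval, Finset.prod_Ico_eq_prod_range]
    apply Finset.prod_congr rfl
    intro l _
    congr 1
    rw [← hji']
    push_cast
    ring
  rw [hIco]
  have hneg : (-1 : R) ^ a * (-1 : R) ^ a = 1 := by
    rw [← mul_pow]; norm_num
  calc (-1 : R) ^ a * (G * e i j * ((-1 : R) ^ a *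
        ∏ l ∈ Finset.range ((j - i - 1).val), d (i + 1 + (l : ZMod n))))
      = ((-1 : R) ^ a * (-1 : R) ^ a) * (G * (e i j *
        ∏ l ∈ Finset.range ((j - i - 1).val), d (i + 1 + (l : ZMod n)))) := by ring
    _ = G * (e i j * ∏ l ∈ Finset.range ((j - i - 1).val), d (i + 1 + (l : ZMod n))) := by
        rw [hneg, one_mul]

private lemma term_c {R : Type*} [CommRing R] [NeZero n] (hn : 2 ≤ n)
    (M : Matrix (ZMod n) (ZMod n) R) (d : ZMod n → R)
    (hdiag : ∀ i, M i i = d i) (hsub : ∀ i, M i (i + 1) = -1) :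
    ((Equiv.Perm.sign (Pp (0 : ZMod n) (n - 1)) : ℤ) : R)
      * ∏ k, M (Pp (0 : ZMod n) (n - 1) k) k = -1 := by
  rw [prod_M_Pp hn M d hdiag hsub 0 (n - 1) (by omega) (by omega), sign_Pp hn]
  have h1 : (0 : ZMod n) + ((n - 1 : ℕ) : ZMod n) = -1 := by
    rw [Nat.cast_sub (by omega : 1 ≤ n), ZMod.natCast_self]
    push_cast; ring
  rw [h1]
  have h2 : M (-1) (0 : ZMod n) = -1 := by
    have := hsub (-1)
    rwa [neg_add_cancel] at this
  rw [h2]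
  have h3 : Finset.Ico (n - 1 + 1) n = ∅ := by
    rw [show n - 1 + 1 = n by omega]
    exact Finset.Ico_self n
  rw [h3, Finset.prod_empty]
  have hsign : ((((-1 : ℤˣ) ^ (n - 1) : ℤˣ) : ℤ) : R) = (-1 : R) ^ (n - 1) := by
    push_cast; ring
  rw [hsign]
  have hneg : (-1 : R) ^ (n - 1) * (-1 : R) ^ (n - 1) = 1 := by
    rw [← mul_pow]; norm_num
  calc (-1 : R) ^ (n - 1) * (-1 * ((-1 : R) ^ (n - 1) * 1))
      = -((-1 : R) ^ (n - 1) * (-1 : R) ^ (n - 1)) := by ring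
    _ = -1 := by rw [hneg]

private lemma classify (hn : 2 ≤ n) (σ : Equiv.Perm (ZMod n))
    (h1 : ∀ k₁ k₂ : ZMod n, (σ k₁ ≠ k₁ ∧ σ k₁ ≠ k₁ - 1) → (σ k₂ ≠ k₂ ∧ σ k₂ ≠ k₂ - 1) → k₁ = k₂) :
    σ = 1 ∨ σ = Pp (0 : ZMod n) (n - 1) ∨
      ∃ i j : ZMod n, j ≠ i ∧ j ≠ i + 1 ∧ σ = Pp j ((i - j).val) := by
  haveI : NeZero n := ⟨by omega⟩
  by_cases hoffex : ∃ k, σ k ≠ k ∧ σ k ≠ k - 1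
  · obtain ⟨j, hj1, hj2⟩ := hoffex
    right; right
    have hothers : ∀ k, k ≠ j → σ k = k ∨ σ k = k - 1 := by
      intro k hk
      by_contra hcon
      push_neg at hcon
      exact hk (h1 k j hcon ⟨hj1, hj2⟩)
    refine ⟨σ j, j, Ne.symm hj1, ?_, ?_⟩
    · intro h
      exact hj2 (eq_sub_iff_add_eq.mpr h.symm)
    · have ha1 : 1 ≤ (σ j - j).val := by
        rcases Nat.eq_zero_or_pos ((σ j - j).val) with h0 | hp
        · exact absurd (sub_eq_zero.mp ((ZMod.val_eq_zero _).mp h0)) hj1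
        · exact hp
      exact Pp_unique hn σ j _ ha1 (ZMod.val_lt _) (zmod_rep j (σ j)) hothers
  · push_neg at hoffex
    have hall : ∀ k, σ k = k ∨ σ k = k - 1 := by
      intro k
      by_cases h : σ k = k
      · exact Or.inl h
      · exact Or.inr (hoffex k h)
    by_cases hid : σ = 1
    · exact Or.inl hid
    · right; left
      have hex : ∃ j, σ j ≠ j := by
        by_contra hcon
        push_neg at hcon
        exact hid (Equiv.ext fun k => hcon k)
      obtain ⟨j, hj⟩ := hex
      have hσj : σ j = j + ((n - 1 : ℕ) : ZMod n) := by
        rcases hall j with h | h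
        · exact absurd h hj
        · rw [h, Nat.cast_sub (by omega : 1 ≤ n), ZMod.natCast_self]
          push_cast; ring
      have hU : σ = Pp j (n - 1) :=
        Pp_unique hn σ j (n - 1) (by omega) (by omega) hσj (fun k _ => hall k)
      rw [hU]
      apply Pp_unique hn (Pp j (n - 1)) 0 (n - 1) (by omega) (by omega)
      · rw [Pp_shift hn j 0, Nat.cast_sub (by omega : 1 ≤ n), ZMod.natCast_self]
        push_cast; ring
      · intro k _
        exact Or.inr (Pp_shift hn j k)

theorem stmt_8 {R : Type*} [CommRing R] (s t : Rˣ) (G : R)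
    (hG : G = 1 - (s : R) * (t : R))
    (n : ℕ) (hn : 2 ≤ n) [NeZero n]
    (w : ℤ) (d : ZMod n → R)
    (hd : ∏ i : ZMod n, d i = (((s * t) ^ w : Rˣ) : R))
    (e : ZMod n → ZMod n → R)
    (M : Matrix (ZMod n) (ZMod n) R)
    (hdiag : ∀ i : ZMod n, M i i = d i)
    (hsub : ∀ i : ZMod n, M i (i + 1) = -1)
    (hoff : ∀ i j : ZMod n, j ≠ i → j ≠ i + 1 → M i j = G * e i j) :
    G ^ 2 ∣
      M.det - ((((s * t) ^ w : Rˣ) : R) - 1) -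
        G * ∑ i : ZMod n, ∑ j ∈ Finset.univ.filter (fun j : ZMod n => j ≠ i ∧ j ≠ i + 1),
              e i j * ∏ l ∈ Finset.range ((j - i - 1 : ZMod n).val), d (i + 1 + (l : ZMod n)) := by
  classical
  set X : R := (((s * t) ^ w : Rˣ) : R) with hX
  set f : Equiv.Perm (ZMod n) → R :=
    fun σ => ((Equiv.Perm.sign σ : ℤ) : R) * ∏ k, M (σ k) k with hf
  have hdet : M.det = ∑ σ : Equiv.Perm (ZMod n), f σ := Matrix.det_apply' M
  set pairs : Finset (ZMod n × ZMod n) :=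
    Finset.univ.filter (fun p => p.2 ≠ p.1 ∧ p.2 ≠ p.1 + 1) with hpairs
  set Φ : ZMod n × ZMod n → Equiv.Perm (ZMod n) :=
    fun p => Pp p.2 ((p.1 - p.2).val) with hΦ
  set c : Equiv.Perm (ZMod n) := Pp (0 : ZMod n) (n - 1) with hc
  set T : Finset (Equiv.Perm (ZMod n)) := pairs.image Φ with hT
  set S : Finset (Equiv.Perm (ZMod n)) := insert 1 (insert c T) with hS
  have hpmem : ∀ p : ZMod n × ZMod n, p ∈ pairs ↔ (p.2 ≠ p.1 ∧ p.2 ≠ p.1 + 1) := by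
    intro p; rw [hpairs]; simp
  have hΦapp : ∀ p : ZMod n × ZMod n, Φ p p.2 = p.1 := by
    intro p
    show Pp p.2 ((p.1 - p.2).val) p.2 = p.1
    rw [Pp_self, ZMod.natCast_val, ZMod.cast_id]; ring
  have hΦ1 : ∀ p ∈ pairs, Φ p ≠ 1 := by
    intro p hp h
    have h2 := hΦapp p
    rw [h] at h2
    exact ((hpmem p).mp hp).1 h2
  have hΦc : ∀ p ∈ pairs, Φ p ≠ c := by
    intro p hp h
    have h2 := hΦapp p
    rw [h] at h2
    have h3 : c p.2 = p.2 - 1 := Pp_shift hn 0 p.2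
    rw [h3] at h2
    exact ((hpmem p).mp hp).2 (eq_add_of_sub_eq h2)
  have h1c : (1 : Equiv.Perm (ZMod n)) ≠ c := by
    intro h
    have h2 : (0 : ZMod n) = c 0 := by rw [← h]; rfl
    rw [Pp_shift hn 0 0] at h2
    exact zmod_one_ne_zero hn (by linear_combination h2)
  have h1T : (1 : Equiv.Perm (ZMod n)) ∉ insert c T := by
    intro h
    rcases Finset.mem_insert.mp h with h | h
    · exact h1c h
    · obtain ⟨p, hp, hpe⟩ := Finset.mem_image.mp h
      exact hΦ1 p hp hpe
  have hcT : c ∉ T := by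
    intro h
    obtain ⟨p, hp, hpe⟩ := Finset.mem_image.mp h
    exact hΦc p hp hpe
  have hinj : ∀ p ∈ pairs, ∀ q ∈ pairs, Φ p = Φ q → p = q := by
    intro p hp q hq h
    have hq' := (hpmem q).mp hq
    have h2 : p.2 = q.2 := by
      by_contra hne
      have hcase : Φ p q.2 = q.2 ∨ Φ p q.2 = q.2 - 1 :=
        Pp_cases hn p.2 ((p.1 - p.2).val) (ZMod.val_lt _) q.2 (Ne.symm hne)
      have hc2 : Φ p q.2 = q.1 := by rw [h, hΦapp q]
      rcases hcase with h3 | h3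
      · rw [hc2] at h3; exact hq'.1 h3.symm
      · rw [hc2] at h3; exact hq'.2 (eq_add_of_sub_eq h3.symm)
    have h1 : p.1 = q.1 := by rw [← hΦapp p, ← hΦapp q, h, h2]
    exact Prod.ext h1 h2
  have hf1 : f 1 = X := by
    rw [hf]
    simp only [map_one, Units.val_one, Int.cast_one, one_mul, Equiv.Perm.one_apply]
    rw [Finset.prod_congr rfl (fun k _ => hdiag k)]
    exact hd
  have hfc : f c = -1 := by
    rw [hf, hc]
    exact term_c hn M d hdiag hsub
  have hfp : ∀ p ∈ pairs, f (Φ p)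
      = G * (e p.1 p.2 * ∏ l ∈ Finset.range ((p.2 - p.1 - 1).val), d (p.1 + 1 + (l : ZMod n))) := by
    intro p hp
    obtain ⟨hj, hj1⟩ := (hpmem p).mp hp
    rw [hf]
    exact term_pair hn G M d e hdiag hsub hoff p.1 p.2 hj hj1
  have hsum_S : ∑ σ ∈ S, f σ
      = X - 1 + G * ∑ i : ZMod n, ∑ j ∈ Finset.univ.filter (fun j : ZMod n => j ≠ i ∧ j ≠ i + 1),
          e i j * ∏ l ∈ Finset.range ((j - i - 1 : ZMod n).val), d (i + 1 + (l : ZMod n)) := by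
    rw [hS, Finset.sum_insert h1T, Finset.sum_insert hcT, hT, Finset.sum_image hinj,
      Finset.sum_congr rfl hfp, ← Finset.mul_sum, hf1, hfc]
    have hps : ∑ p ∈ pairs,
        (e p.1 p.2 * ∏ l ∈ Finset.range ((p.2 - p.1 - 1).val), d (p.1 + 1 + (l : ZMod n)))
        = ∑ i : ZMod n, ∑ j ∈ Finset.univ.filter (fun j : ZMod n => j ≠ i ∧ j ≠ i + 1),
          e i j * ∏ l ∈ Finset.range ((j - i - 1 : ZMod n).val), d (i + 1 + (l : ZMod n)) := by
      rw [hpairs, Finset.sum_filter, Fintype.sum_prod_type]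
      refine Finset.sum_congr rfl (fun i _ => ?_)
      rw [Finset.sum_filter]
    rw [hps]; ring
  have hrest : ∀ σ ∈ Finset.univ \ S, G ^ 2 ∣ f σ := by
    intro σ hσ
    have hσS : σ ∉ S := (Finset.mem_sdiff.mp hσ).2
    have hnotall : ¬ ∀ k₁ k₂ : ZMod n,
        (σ k₁ ≠ k₁ ∧ σ k₁ ≠ k₁ - 1) → (σ k₂ ≠ k₂ ∧ σ k₂ ≠ k₂ - 1) → k₁ = k₂ := by
      intro hallk
      rcases classify hn σ hallk with h | h | ⟨i, j, hji, hji1, h⟩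
      · exact hσS (by rw [hS, h]; exact Finset.mem_insert_self _ _)
      · exact hσS (by
          rw [hS, h, ← hc]
          exact Finset.mem_insert_of_mem (Finset.mem_insert_self _ _))
      · apply hσS
        rw [hS]
        apply Finset.mem_insert_of_mem
        apply Finset.mem_insert_of_mem
        rw [hT]
        exact Finset.mem_image.mpr ⟨(i, j), (hpmem (i, j)).mpr ⟨hji, hji1⟩, h.symm⟩
    push_neg at hnotall
    obtain ⟨k₁, k₂, hk₁, hk₂, hne⟩ := hnotall
    have hM1 : M (σ k₁) k₁ = G * e (σ k₁) k₁ := by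
      apply hoff _ _ (Ne.symm hk₁.1)
      intro h
      exact hk₁.2 (eq_sub_iff_add_eq.mpr h.symm)
    have hM2 : M (σ k₂) k₂ = G * e (σ k₂) k₂ := by
      apply hoff _ _ (Ne.symm hk₂.1)
      intro h
      exact hk₂.2 (eq_sub_iff_add_eq.mpr h.symm)
    have hprod : ∏ k, M (σ k) k
        = M (σ k₁) k₁ * (M (σ k₂) k₂ * ∏ k ∈ (Finset.univ.erase k₁).erase k₂, M (σ k) k) := by
      have e1 : ∏ k : ZMod n, M (σ k) k
          = M (σ k₁) k₁ * ∏ k ∈ Finset.univ.erase k₁, M (σ k) k :=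
        (Finset.mul_prod_erase _ _ (Finset.mem_univ k₁)).symm
      have e2 : ∏ k ∈ Finset.univ.erase k₁, M (σ k) k
          = M (σ k₂) k₂ * ∏ k ∈ (Finset.univ.erase k₁).erase k₂, M (σ k) k :=
        (Finset.mul_prod_erase _ _
          (Finset.mem_erase.mpr ⟨hne.symm, Finset.mem_univ k₂⟩)).symm
      rw [e1, e2]
    refine ⟨((Equiv.Perm.sign σ : ℤ) : R)
      * (e (σ k₁) k₁ * e (σ k₂) k₂ * ∏ k ∈ (Finset.univ.erase k₁).erase k₂, M (σ k) k), ?_⟩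
    rw [hf]
    simp only []
    rw [hprod, hM1, hM2]
    ring
  have hsplit : ∑ σ : Equiv.Perm (ZMod n), f σ
      = ∑ σ ∈ Finset.univ \ S, f σ + ∑ σ ∈ S, f σ :=
    (Finset.sum_sdiff (Finset.subset_univ S)).symm
  rw [hdet, hsplit, hsum_S]
  have hgoal : ∑ σ ∈ Finset.univ \ S, f σ
        + (X - 1 + G * ∑ i : ZMod n, ∑ j ∈ Finset.univ.filter (fun j : ZMod n => j ≠ i ∧ j ≠ i + 1),
            e i j * ∏ l ∈ Finset.range ((j - i - 1 : ZMod n).val), d (i + 1 + (l : ZMod n)))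
        - (X - 1)
        - G * ∑ i : ZMod n, ∑ j ∈ Finset.univ.filter (fun j : ZMod n => j ≠ i ∧ j ≠ i + 1),
            e i j * ∏ l ∈ Finset.range ((j - i - 1 : ZMod n).val), d (i + 1 + (l : ZMod n))
      = ∑ σ ∈ Finset.univ \ S, f σ := by ring
  rw [hgoal]
  exact Finset.dvd_sum hrest
end
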